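/- If the level-ℓ nodes covered by an interval T form a contiguous interval I of level-ℓ nodes, then the covered-but-not-subsumed level-ℓ nodes are exactly those elements of I whose parent is not covered; these lie among the first B−1 and last B−1 elements of I, giving at most 2(B−1) such nodes, and at most B−1 if I starts at the lexicographically smallest level-ℓ node. -/

import Mathlib

/-- A node of the complete `B`-ary tree of depth `L`: a node at depth `d ≤ L`
is identified by its index `idx < B ^ d` among the depth-`d` nodes in
left-to-right (lexicographic) order.  A leaf is a node of depth `L`. -/
structure TreeNode (B L : ℕ) where
  depth : ℕ
  idx : ℕ
  depth_le : depth ≤ L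
  idx_lt : idx < B ^ depth

namespace TreeNode

instance {B L : ℕ} : DecidableEq (TreeNode B L) := fun u v =>
  decidable_of_iff (u.depth = v.depth ∧ u.idx = v.idx) (by
    cases u; cases v; simp [TreeNode.mk.injEq])

/-- The set of leaves (identified with numbers `< B ^ L` in lexicographic
order) descending from a node. -/
def leafSet {B L : ℕ} (u : TreeNode B L) : Set ℕ :=
  {x | x < B ^ L ∧ x / B ^ (L - u.depth) = u.idx}

/-- `u` is a (weak) prefix/ancestor of `v`. -/
def IsPrefix {B L : ℕ} (u v : TreeNode B L) : Prop :=
  u.depth ≤ v.depth ∧ v.idx / B ^ (v.depth - u.depth) = u.idx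

/-- `u` is a strict prefix / strict ancestor of `v`. -/
def IsStrictPrefix {B L : ℕ} (u v : TreeNode B L) : Prop :=
  u.depth < v.depth ∧ v.idx / B ^ (v.depth - u.depth) = u.idx

/-- A node is covered by a leaf set `T` if all its leaf-descendants lie in `T`. -/
def covered {B L : ℕ} (T : Set ℕ) (u : TreeNode B L) : Prop :=
  u.leafSet ⊆ T

/-- A node is subsumed by `T` if some strict ancestor of it is covered by `T`. -/
def subsumed {B L : ℕ} (T : Set ℕ) (u : TreeNode B L) : Prop :=
  ∃ v : TreeNode B L, v.IsStrictPrefix u ∧ v.covered T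

/-- Maximal covered node: covered, with no covered strict ancestor. -/
def maximalCovered {B L : ℕ} (T : Set ℕ) (u : TreeNode B L) : Prop :=
  u.covered T ∧ ¬ u.subsumed T

end TreeNode
/-- The parent of `u` (at depth one less, with index `u.idx / B`) is covered. -/
def parentCovered {B L : ℕ} (T : Set ℕ) (u : TreeNode B L) : Prop :=
  ∃ p : TreeNode B L, p.depth + 1 = u.depth ∧ p.idx = u.idx / B ∧ p.covered T

/-!
A maximal covered node `u` of positive depth is one whose parent is not covered, so some
leaf below the parent is missing from `T`; the depth-`ℓ` ancestor of that leaf is a sibling of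
`u` that is not covered, hence lies outside `[c, d]`. Siblings have indices less than `B`
apart, so `u` is within `B - 1` of an end of `[c, d]`, and of the right end when `c = 0`.
-/

namespace TreeNode

variable {B L : ℕ}

theorem ext_depth_idx {u v : TreeNode B L} (hd : u.depth = v.depth) (hi : u.idx = v.idx) :
    u = v := by
  cases u; cases v; subst hd hi; rfl

theorem leafSet_subset_of_isPrefix {u v : TreeNode B L} (h : u.IsPrefix v) :
    v.leafSet ⊆ u.leafSet := by
  rintro x ⟨hx, hxv⟩
  refine ⟨hx, ?_⟩
  have := v.depth_le
  have := h.1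
  rw [show L - u.depth = (L - v.depth) + (v.depth - u.depth) by omega, pow_add,
    ← Nat.div_div_eq_div_mul, hxv, h.2]

def ancestorOfLeaf (x : ℕ) (hx : x < B ^ L) (k : ℕ) (hk : k ≤ L) : TreeNode B L :=
  ⟨k, x / B ^ (L - k), hk, Nat.div_lt_of_lt_mul (by rwa [← pow_add, Nat.sub_add_cancel hk])⟩

theorem mem_leafSet_ancestorOfLeaf (x : ℕ) (hx : x < B ^ L) (k : ℕ) (hk : k ≤ L) :
    x ∈ (ancestorOfLeaf x hx k hk).leafSet :=
  ⟨hx, rfl⟩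

def parent (u : TreeNode B L) (hu : u.depth ≠ 0) : TreeNode B L :=
  ⟨u.depth - 1, u.idx / B, by have := u.depth_le; omega,
    Nat.div_lt_of_lt_mul (by rw [← pow_succ', Nat.sub_add_cancel (by omega)]; exact u.idx_lt)⟩

theorem parent_isStrictPrefix (u : TreeNode B L) (hu : u.depth ≠ 0) :
    (u.parent hu).IsStrictPrefix u :=
  ⟨by simp only [parent]; omega, by simp only [parent, show u.depth - (u.depth - 1) = 1 by omega,
    pow_one]⟩

theorem isPrefix_parent_of_isStrictPrefix {u v : TreeNode B L} (h : v.IsStrictPrefix u)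
    (hu : u.depth ≠ 0) : v.IsPrefix (u.parent hu) := by
  refine ⟨by simp only [parent]; have := h.1; omega, ?_⟩
  simp only [parent]
  rw [Nat.div_div_eq_div_mul, ← pow_succ', ← h.2]
  congr 2
  have := h.1
  omega

theorem subsumed_iff_covered_parent {T : Set ℕ} {u : TreeNode B L} (hu : u.depth ≠ 0) :
    u.subsumed T ↔ (u.parent hu).covered T :=
  ⟨fun ⟨_, hvu, hv⟩ =>
    (leafSet_subset_of_isPrefix (isPrefix_parent_of_isStrictPrefix hvu hu)).trans hv,
    fun h => ⟨_, parent_isStrictPrefix u hu, h⟩⟩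

theorem parentCovered_iff_covered_parent {T : Set ℕ} {u : TreeNode B L} (hu : u.depth ≠ 0) :
    parentCovered T u ↔ (u.parent hu).covered T :=
  ⟨fun ⟨_, hpd, hpi, hp⟩ =>
    ext_depth_idx (v := u.parent hu) (by simp only [parent]; omega) hpi ▸ hp,
    fun h => ⟨_, by simp only [parent]; omega, rfl, h⟩⟩

theorem subsumed_iff_parentCovered {T : Set ℕ} {u : TreeNode B L} (hu : u.depth ≠ 0) :
    u.subsumed T ↔ parentCovered T u :=
  (subsumed_iff_covered_parent hu).trans (parentCovered_iff_covered_parent hu).symm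

theorem exists_sibling_not_covered {T : Set ℕ} {u : TreeNode B L} (hu : u.depth ≠ 0)
    (h : ¬ u.subsumed T) :
    ∃ v : TreeNode B L, v.depth = u.depth ∧ v.idx / B = u.idx / B ∧ ¬ v.covered T := by
  rw [subsumed_iff_covered_parent hu, covered, Set.not_subset] at h
  obtain ⟨x, ⟨hx, hxp⟩, hxT⟩ := h
  refine ⟨ancestorOfLeaf x hx u.depth u.depth_le, rfl, ?_,
    fun hv => hxT (hv (mem_leafSet_ancestorOfLeaf x hx _ _))⟩
  simp only [ancestorOfLeaf, parent] at hxp ⊢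
  rw [Nat.div_div_eq_div_mul, ← pow_succ, ← hxp]
  congr 2
  have := u.depth_le
  omega

theorem exists_sibling_idx_not_mem {T s : Set ℕ} {u : TreeNode B L}
    (hs : ∀ v : TreeNode B L, v.depth = u.depth → (v.covered T ↔ v.idx ∈ s))
    (hu : u.depth ≠ 0) (h : ¬ u.subsumed T) : ∃ y ∉ s, y / B = u.idx / B := by
  obtain ⟨v, hvd, hvi, hv⟩ := exists_sibling_not_covered hu h
  exact ⟨v.idx, fun hvs => hv ((hs v hvd).2 hvs), hvi⟩

theorem ncard_le_card_of_idx_mem {ℓ : ℕ} {s : Set (TreeNode B L)}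
    (hs : ∀ u ∈ s, u.depth = ℓ) {F : Finset ℕ} (hF : ∀ u ∈ s, u.idx ∈ F) :
    s.ncard ≤ F.card := by
  rw [← Set.ncard_coe_finset]
  exact Set.ncard_le_ncard_of_injOn idx hF
    (fun u hu v hv h => ext_depth_idx ((hs u hu).trans (hs v hv).symm) h) F.finite_toSet

end TreeNode

theorem Nat.lt_add_of_div_eq {B x y : ℕ} (hB : 0 < B) (h : x / B = y / B) : x < y + B := by
  have := Nat.lt_div_mul_add (a := x) hB
  have := Nat.div_mul_le_self y B
  rw [h] at *
  omega

open TreeNode in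
theorem covered_not_subsumed_description_general
    (B L a b ℓ c d : ℕ) (hB : 2 ≤ B) (h1 : 1 ≤ ℓ)
    (hI : ∀ u : TreeNode B L, u.depth = ℓ →
      (u.covered (Set.Ico a b) ↔ u.idx ∈ Set.Icc c d)) :
    (∀ u : TreeNode B L, u.depth = ℓ →
      ((u.covered (Set.Ico a b) ∧ ¬ u.subsumed (Set.Ico a b)) ↔
        (u.idx ∈ Set.Icc c d ∧ ¬ parentCovered (Set.Ico a b) u))) ∧
    (∀ u : TreeNode B L, u.depth = ℓ → u.covered (Set.Ico a b) →
      ¬ u.subsumed (Set.Ico a b) →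
      u.idx < c + (B - 1) ∨ d < u.idx + (B - 1)) ∧
    {u : TreeNode B L | u.depth = ℓ ∧ u.covered (Set.Ico a b) ∧
      ¬ u.subsumed (Set.Ico a b)}.ncard ≤ 2 * (B - 1) ∧
    (c = 0 →
      {u : TreeNode B L | u.depth = ℓ ∧ u.covered (Set.Ico a b) ∧
        ¬ u.subsumed (Set.Ico a b)}.ncard ≤ B - 1) := by
  have hnear : ∀ u : TreeNode B L, u.depth = ℓ → u.covered (Set.Ico a b) →
      ¬ u.subsumed (Set.Ico a b) →
      c ≤ u.idx ∧ u.idx ≤ d ∧ (u.idx < c + (B - 1) ∨ d < u.idx + (B - 1)) ∧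
        (c = 0 → d < u.idx + (B - 1)) := by
    intro u hu hcov hns
    obtain ⟨y, hy, hyu⟩ :=
      exists_sibling_idx_not_mem (fun v hv => hI v (hv.trans hu)) (by omega) hns
    have hu_mem := (hI u hu).1 hcov
    have := Nat.lt_add_of_div_eq (by omega) hyu
    have := Nat.lt_add_of_div_eq (by omega) hyu.symm
    simp only [Set.mem_Icc] at hy hu_mem
    omega
  refine ⟨fun u hu => by rw [hI u hu, subsumed_iff_parentCovered (by omega)],
    fun u hu hcov hns => (hnear u hu hcov hns).2.2.1, ?_, fun hc => ?_⟩
  · calc _ ≤ (Finset.Ico c (c + (B - 1)) ∪ Finset.Icc (d + 1 - (B - 1)) d).card :=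
          ncard_le_card_of_idx_mem (fun u hu => hu.1) fun u hu => by
            have := hnear u hu.1 hu.2.1 hu.2.2
            simp only [Finset.mem_union, Finset.mem_Ico, Finset.mem_Icc]
            omega
      _ ≤ 2 * (B - 1) := by
          grw [Finset.card_union_le, Nat.card_Ico, Nat.card_Icc]
          omega
  · calc _ ≤ (Finset.Icc (d + 1 - (B - 1)) d).card :=
          ncard_le_card_of_idx_mem (fun u hu => hu.1) fun u hu => by
            have := hnear u hu.1 hu.2.1 hu.2.2
            simp only [Finset.mem_Icc]
            omega
      _ ≤ B - 1 := by
          rw [Nat.card_Icc]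
          omega

/-- Suppose the level-`ℓ` nodes covered by the leaf interval
`T = [a,b)` are exactly those with index in `[c,d]`.  Then the covered-but-not-
subsumed level-`ℓ` nodes are exactly those elements of the interval whose
parent is not covered; each such node lies among the first `B−1` or last `B−1`
elements of the interval; there are at most `2(B−1)` of them, and at most
`B−1` if the interval starts at the lexicographically smallest node (`c = 0`). -/
theorem covered_not_subsumed_description
    (B L a b ℓ c d : ℕ) (hB : 2 ≤ B) (h1 : 1 ≤ ℓ) (hℓ : ℓ ≤ L)
    (hb : b ≤ B ^ L) (hd : d < B ^ ℓ) (hcd : c ≤ d)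
    (hI : ∀ u : TreeNode B L, u.depth = ℓ →
      (u.covered (Set.Ico a b) ↔ u.idx ∈ Set.Icc c d)) :
    (∀ u : TreeNode B L, u.depth = ℓ →
      ((u.covered (Set.Ico a b) ∧ ¬ u.subsumed (Set.Ico a b)) ↔
        (u.idx ∈ Set.Icc c d ∧ ¬ parentCovered (Set.Ico a b) u))) ∧
    (∀ u : TreeNode B L, u.depth = ℓ → u.covered (Set.Ico a b) →
      ¬ u.subsumed (Set.Ico a b) →
      u.idx < c + (B - 1) ∨ d < u.idx + (B - 1)) ∧
    {u : TreeNode B L | u.depth = ℓ ∧ u.covered (Set.Ico a b) ∧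
      ¬ u.subsumed (Set.Ico a b)}.ncard ≤ 2 * (B - 1) ∧
    (c = 0 →
      {u : TreeNode B L | u.depth = ℓ ∧ u.covered (Set.Ico a b) ∧
        ¬ u.subsumed (Set.Ico a b)}.ncard ≤ B - 1) :=
  covered_not_subsumed_description_general B L a b ℓ c d hB h1 hI
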